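/- For fixed k ≥ 0, the expected number of rankings of a binary tree-child network with n leaves and k reticulate vertices chosen uniformly at random satisfies E[X_{n,k}] ∼ (1/4^k) · n! / C(2n−2, n−1) as n → ∞; in particular, for each fixed k ≥ 1, lim_{n→∞} E[X_{n,k+1}] / E[X_{n,k}] = 1/4. -/

import Mathlib

open Filter

/-- The unsigned Stirling numbers of the first kind. -/
def stirling1 : ℕ → ℕ → ℕ
  | 0, 0 => 1
  | 0, _ + 1 => 0
  | _ + 1, 0 => 0
  | m + 1, j + 1 => stirling1 m j + m * stirling1 m (j + 1)


section
open Finset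

lemma stirling1_eq_zero (m : ℕ) : ∀ j, m < j → stirling1 m j = 0 := by
  induction m with
  | zero => intro j h; cases j with
    | zero => omega
    | succ j => rfl
  | succ m ih => intro j h; cases j with
    | zero => omega
    | succ j => simp [stirling1, ih j (by omega), ih (j+1) (by omega)]

lemma stirling1_self (m : ℕ) : stirling1 m m = 1 := by
  induction m with
  | zero => rfl
  | succ m ih => simp [stirling1, ih, stirling1_eq_zero m (m+1) (by omega)]

lemma stirling1_rec {k m : ℕ} (h : k + 1 ≤ m) :
    stirling1 (m+1) (m+1-(k+1)) = stirling1 m (m-(k+1)) + m * stirling1 m (m-k) := by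
  have h1 : m + 1 - (k+1) = (m - (k+1)) + 1 := by omega
  have h2 : m - (k+1) + 1 = m - k := by omega
  rw [h1, stirling1, h2]

-- key inequality
lemma pow_succ_sub_le (d : ℕ) (x : ℝ) (hx : 0 ≤ x) :
    (d+1 : ℝ) * x ^ d ≤ (x+1) ^ (d+1) - x ^ (d+1) ∧
    (x+1) ^ (d+1) - x ^ (d+1) ≤ (d+1 : ℝ) * (x+1) ^ d := by
  have hg := geom_sum₂_mul (x+1) x (d+1)
  simp only [add_sub_cancel_left, mul_one] at hg
  rw [← hg]
  constructor
  · calc (d+1:ℝ) * x ^ d = ∑ i ∈ range (d+1), x ^ d := by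
          simp [mul_comm]
      _ ≤ ∑ i ∈ range (d+1), (x+1) ^ i * x ^ (d+1-1-i) := by
          apply Finset.sum_le_sum
          intro i hi
          simp only [mem_range] at hi
          have : x ^ d = x ^ i * x ^ (d - i) := by rw [← pow_add]; congr 1; omega
          rw [this]
          have : d + 1 - 1 - i = d - i := by omega
          rw [this]
          gcongr
          linarith
  · calc ∑ i ∈ range (d+1), (x+1) ^ i * x ^ (d+1-1-i)
        ≤ ∑ i ∈ range (d+1), (x+1) ^ d := by
          apply Finset.sum_le_sum
          intro i hi
          simp only [mem_range] at hi
          have hd : (x+1) ^ d = (x+1) ^ i * (x+1) ^ (d - i) := by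
            rw [← pow_add]; congr 1; omega
          rw [hd]
          have : d + 1 - 1 - i = d - i := by omega
          rw [this]
          exact mul_le_mul_of_nonneg_left (pow_le_pow_left₀ hx (by linarith) _) (by positivity)
      _ = (d+1:ℝ) * (x+1) ^ d := by simp [mul_comm]

lemma sum_pow_le (d m : ℕ) :
    (d+1 : ℝ) * ∑ j ∈ range m, (j:ℝ) ^ d ≤ (m:ℝ) ^ (d+1) := by
  induction m with
  | zero => simp
  | succ m ih =>
      rw [Finset.sum_range_succ, mul_add]
      have key := (pow_succ_sub_le d (m:ℝ) (by positivity)).1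
      push_cast
      push_cast at ih
      linarith

lemma le_sum_pow (d m : ℕ) :
    (m:ℝ) ^ (d+1) ≤ (d+1 : ℝ) * (∑ j ∈ range m, (j:ℝ) ^ d + (m:ℝ) ^ d) := by
  induction m with
  | zero =>
      simp only [Nat.cast_zero]
      rw [zero_pow (by omega)]
      positivity
  | succ m ih =>
      rw [Finset.sum_range_succ]
      have key := (pow_succ_sub_le d (m:ℝ) (by positivity)).2
      push_cast
      push_cast at ih
      nlinarith

end

section
open Filter Finset Asymptotics

lemma sum_pow_lb (d m : ℕ) : (m:ℝ) - 1 ≤ ∑ j ∈ range m, (j:ℝ) ^ d := by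
  calc (m:ℝ) - 1 ≤ ∑ j ∈ Finset.Ico 1 m, (1:ℝ) := by
        rw [Finset.sum_const, Nat.card_Ico, nsmul_eq_mul, mul_one]
        rcases m with _ | m
        · norm_num
        · rw [Nat.add_sub_cancel]; push_cast; norm_num
    _ ≤ ∑ j ∈ Finset.Ico 1 m, (j:ℝ) ^ d := by
        apply Finset.sum_le_sum
        intro i hi
        simp only [Finset.mem_Ico] at hi
        exact one_le_pow₀ (by exact_mod_cast hi.1)
    _ ≤ ∑ j ∈ range m, (j:ℝ) ^ d := by
        apply Finset.sum_le_sum_of_subset_of_nonneg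
        · rw [Finset.range_eq_Ico]; exact Finset.Ico_subset_Ico (by omega) le_rfl
        · intros; positivity

lemma sum_pow_tendsto_atTop (d : ℕ) :
    Tendsto (fun m : ℕ => ∑ j ∈ range m, (j:ℝ) ^ d) atTop atTop :=
  tendsto_atTop_mono (sum_pow_lb d)
    (tendsto_atTop_add_const_right _ (-1) tendsto_natCast_atTop_atTop)

lemma sum_pow_ratio (d : ℕ) :
    Tendsto (fun m : ℕ => (∑ j ∈ range m, (j:ℝ) ^ d) / (m:ℝ) ^ (d+1))
      atTop (nhds (1 / ((d:ℝ)+1))) := by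
  have hd : (0:ℝ) < (d:ℝ) + 1 := by positivity
  apply tendsto_of_tendsto_of_tendsto_of_le_of_le'
      (g := fun m : ℕ => 1 / ((d:ℝ)+1) - 1 / (m:ℝ)) (h := fun _ => 1 / ((d:ℝ)+1))
  · have : Tendsto (fun m : ℕ => 1 / (m:ℝ)) atTop (nhds 0) := by
      exact tendsto_one_div_atTop_nhds_zero_nat
    simpa using (tendsto_const_nhds (x := 1 / ((d:ℝ)+1))).sub this
  · exact tendsto_const_nhds
  · filter_upwards [eventually_ge_atTop 1] with m hm
    have hm' : (0:ℝ) < (m:ℝ) := by exact_mod_cast hm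
    have hB := le_sum_pow d m
    rw [div_sub_div _ _ (ne_of_gt hd) (ne_of_gt hm'), div_le_div_iff₀ (by positivity) (by positivity)]
    have hpow : (m:ℝ) ^ (d+1) = (m:ℝ) ^ d * m := by ring
    nlinarith [pow_pos hm' d, pow_pos hm' (d+1)]
  · filter_upwards [eventually_ge_atTop 1] with m hm
    have hm' : (0:ℝ) < (m:ℝ) := by exact_mod_cast hm
    have hA := sum_pow_le d m
    rw [div_le_div_iff₀ (by positivity) hd]
    linarith

lemma sum_asym {u : ℕ → ℝ} {d : ℕ} {c : ℝ}
    (h : Tendsto (fun j : ℕ => u j / (j:ℝ) ^ d) atTop (nhds c)) :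
    Tendsto (fun m : ℕ => (∑ j ∈ range m, u j) / (m:ℝ) ^ (d+1))
      atTop (nhds (c / ((d:ℝ)+1))) := by
  set g : ℕ → ℝ := fun j => (j:ℝ) ^ d with hg
  have hgpos : ∀ m, 2 ≤ m → 0 < ∑ j ∈ range m, g j := by
    intro m hm
    have := sum_pow_lb d m
    have : (1:ℝ) ≤ ∑ j ∈ range m, g j := by
      have hm' : (2:ℝ) ≤ (m:ℝ) := by exact_mod_cast hm
      simp only [hg]; linarith [sum_pow_lb d m]
    linarith
  -- little-o
  have ho : (fun j => u j - c * g j) =o[atTop] g := by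
    rw [isLittleO_iff_tendsto']
    · have : Tendsto (fun j : ℕ => u j / g j - c) atTop (nhds 0) := by
        simpa using h.sub (tendsto_const_nhds (x := c))
      apply this.congr'
      filter_upwards [eventually_ge_atTop 1] with j hj
      have : g j ≠ 0 := by
        have : (0:ℝ) < (j:ℝ) := by exact_mod_cast hj
        positivity
      field_simp
    · filter_upwards [eventually_ge_atTop 1] with j hj hgz
      exfalso
      have : (0:ℝ) < (j:ℝ) := by exact_mod_cast hj
      have : g j ≠ 0 := by positivity
      exact this hgz
  have hsum : (fun m => ∑ j ∈ range m, (u j - c * g j)) =o[atTop]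
      (fun m => ∑ j ∈ range m, g j) :=
    ho.sum_range (fun i => by positivity) (sum_pow_tendsto_atTop d)
  have hratio : Tendsto (fun m => (∑ j ∈ range m, u j) / (∑ j ∈ range m, g j))
      atTop (nhds c) := by
    have h0 : Tendsto (fun m => (∑ j ∈ range m, (u j - c * g j)) / (∑ j ∈ range m, g j))
        atTop (nhds 0) := by
      rw [isLittleO_iff_tendsto'] at hsum
      · exact hsum
      · filter_upwards [eventually_ge_atTop 2] with m hm hz
        exact absurd hz (ne_of_gt (hgpos m hm))
    have := h0.add (tendsto_const_nhds (x := c))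
    rw [zero_add] at this
    apply this.congr'
    filter_upwards [eventually_ge_atTop 2] with m hm
    have hz : (∑ j ∈ range m, g j) ≠ 0 := ne_of_gt (hgpos m hm)
    rw [Finset.sum_sub_distrib, ← Finset.mul_sum]
    field_simp
    ring
  have := hratio.mul (sum_pow_ratio d)
  rw [mul_one_div] at this
  apply this.congr'
  filter_upwards [eventually_ge_atTop 2] with m hm
  have hz : (∑ j ∈ range m, g j) ≠ 0 := ne_of_gt (hgpos m hm)
  field_simp
  rfl

end

section
open Filter Finset

lemma stirling_asym (k : ℕ) :
    Tendsto (fun m : ℕ => (stirling1 m (m - k) : ℝ) / (m:ℝ) ^ (2*k))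
      atTop (nhds (1 / (2^k * (k.factorial : ℝ)))) := by
  induction k with
  | zero =>
      have heq : (fun m : ℕ => (stirling1 m (m - 0) : ℝ) / (m:ℝ) ^ (2*0)) = fun _ => 1 := by
        funext m; simp [stirling1_self]
      rw [heq]
      norm_num
  | succ k ih =>
      set S : ℕ → ℝ := fun m => ∑ j ∈ range m, (j:ℝ) * (stirling1 j (j-k) : ℝ) with hSdef
      set C : ℝ := S (k+1) - (stirling1 (k+1) ((k+1)-(k+1)) : ℝ) with hCdef
      have hrec : ∀ m, k+1 ≤ m → (stirling1 (m+1) (m+1-(k+1)) : ℝ)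
          = (stirling1 m (m-(k+1)) : ℝ) + (m:ℝ) * (stirling1 m (m-k) : ℝ) := by
        intro m hm
        rw [stirling1_rec hm]
        push_cast
        ring
      have hconst : ∀ m, k+1 ≤ m → (stirling1 m (m-(k+1)) : ℝ) = S m - C := by
        intro m hm
        induction m, hm using Nat.le_induction with
        | base => rw [hCdef]; ring
        | succ m hm ih2 =>
            rw [hrec m hm, ih2]
            have hs : S (m+1) = S m + (m:ℝ) * (stirling1 m (m-k) : ℝ) := by
              rw [hSdef]; exact Finset.sum_range_succ _ m
            rw [hs]; ring
      have hu : Tendsto (fun j : ℕ => ((j:ℝ) * (stirling1 j (j-k) : ℝ)) / (j:ℝ) ^ (2*k+1))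
          atTop (nhds (1 / (2^k * (k.factorial : ℝ)))) := by
        apply ih.congr'
        filter_upwards [eventually_ge_atTop 1] with j hj
        have hj' : (j:ℝ) ≠ 0 := by positivity
        rw [pow_succ, mul_comm ((j:ℝ)^(2*k)) _, mul_div_mul_left _ _ hj']
      have hS : Tendsto (fun m : ℕ => S m / (m:ℝ) ^ (2*k+1+1)) atTop
          (nhds ((1 / (2^k * (k.factorial : ℝ))) / (((2*k+1 : ℕ):ℝ)+1))) := sum_asym hu
      have hC : Tendsto (fun m : ℕ => C / (m:ℝ) ^ (2*(k+1))) atTop (nhds 0) := by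
        have h1 : Tendsto (fun m : ℕ => ((m:ℝ) ^ (2*(k+1)))⁻¹) atTop (nhds 0) :=
          ((tendsto_pow_atTop (by omega)).comp tendsto_natCast_atTop_atTop).inv_tendsto_atTop
        simpa [div_eq_mul_inv] using h1.const_mul C
      have hexp : 2*k+1+1 = 2*(k+1) := by ring
      rw [hexp] at hS
      have hlim := hS.sub hC
      have hval : (1 / (2^k * (k.factorial : ℝ))) / (((2*k+1 : ℕ):ℝ)+1) - 0
          = 1 / (2^(k+1) * ((k+1).factorial : ℝ)) := by
        rw [sub_zero, div_div]
        congr 1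
        rw [Nat.factorial_succ]
        push_cast
        ring
      rw [hval] at hlim
      apply hlim.congr'
      filter_upwards [eventually_ge_atTop (k+1)] with m hm
      rw [hconst m hm]; ring

end

/-- The number of ranked tree-child networks on `n` leaves with `k`
reticulate vertices: `RTCN(n,k) = [n-1, n-1-k] · n!(n-1)!/2^{n-1}`. -/
noncomputable def RTCN (n k : ℕ) : ℝ :=
  (stirling1 (n - 1) (n - 1 - k) : ℝ) *
    ((n.factorial : ℝ) * ((n - 1).factorial : ℝ) / 2 ^ (n - 1))

/-- The number of rooted binary phylogenetic trees on `n` leaves. -/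
noncomputable def rbt (n : ℕ) : ℝ :=
  ((2 * n - 2).factorial : ℝ) / (((n - 1).factorial : ℝ) * 2 ^ (n - 1))

section
open Filter Finset

lemma hB_lemma (k : ℕ) :
    Tendsto (fun n : ℕ =>
        (stirling1 (n-1) (n-1-k) : ℝ) * (2^k * (k.factorial : ℝ)) / (n:ℝ)^(2*k))
      atTop (nhds 1) := by
  have h1 : Tendsto (fun n : ℕ => (stirling1 (n-1) (n-1-k) : ℝ) / ((n-1 : ℕ):ℝ)^(2*k))
      atTop (nhds (1 / (2^k * (k.factorial:ℝ)))) :=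
    (stirling_asym k).comp (tendsto_sub_atTop_nat 1)
  have h2 : Tendsto (fun n : ℕ => (((n-1:ℕ):ℝ)/(n:ℝ))^(2*k)) atTop (nhds 1) := by
    have hin : Tendsto (fun n : ℕ => ((n-1:ℕ):ℝ)/(n:ℝ)) atTop (nhds 1) := by
      have hlim : Tendsto (fun n : ℕ => 1 - 1/(n:ℝ)) atTop (nhds 1) := by
        have : Tendsto (fun n : ℕ => 1/(n:ℝ)) atTop (nhds 0) := by
          exact tendsto_one_div_atTop_nhds_zero_nat
        simpa using (tendsto_const_nhds (x := (1:ℝ))).sub this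
      apply hlim.congr'
      filter_upwards [eventually_ge_atTop 1] with n hn
      have hn0 : (n:ℝ) ≠ 0 := by positivity
      rw [Nat.cast_sub hn]
      push_cast
      field_simp
    have := hin.pow (2*k)
    simpa using this
  have hK := (h1.mul h2).mul_const ((2:ℝ)^k * (k.factorial : ℝ))
  have hkf : (2:ℝ)^k * (k.factorial : ℝ) ≠ 0 := by positivity
  have hval : 1 / (2^k * (k.factorial:ℝ)) * 1 * ((2:ℝ)^k * (k.factorial : ℝ)) = 1 := by
    field_simp
  rw [hval] at hK
  apply hK.congr'
  filter_upwards [eventually_ge_atTop 2] with n hn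
  have ha : ((n-1:ℕ):ℝ) ≠ 0 := by
    have : 1 ≤ n - 1 := by omega
    have : (1:ℝ) ≤ ((n-1:ℕ):ℝ) := by exact_mod_cast this
    linarith
  have hap : ((n-1:ℕ):ℝ)^(2*k) ≠ 0 := pow_ne_zero _ ha
  have hnne : (n:ℝ) ≠ 0 := by
    have : (2:ℝ) ≤ (n:ℝ) := by exact_mod_cast hn
    linarith
  have hnp : (n:ℝ)^(2*k) ≠ 0 := pow_ne_zero _ hnne
  rw [div_pow, div_mul_div_comm, mul_comm ((stirling1 (n-1) (n-1-k) : ℕ) : ℝ) _,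
    mul_div_mul_left _ _ hap, div_mul_eq_mul_div]


/-- Assuming `TCN(n,k) ∼ (2n²)^k/k! · TCN(n,0)`, the expected number of
rankings `E[X_{n,k}] = RTCN(n,k)/TCN(n,k)` of a uniformly random binary
tree-child network with `n` leaves and `k` reticulations satisfies
`E[X_{n,k}] ∼ (1/4^k) · n!/C(2n-2, n-1)` for each fixed `k`, and consequently
`E[X_{n,k+1}]/E[X_{n,k}] → 1/4` for each fixed `k ≥ 1`. -/
theorem stmt14 (TCN : ℕ → ℕ → ℝ)
    (hpos : ∀ n k, 0 < TCN n k)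
    (hTCN : ∀ k, Tendsto (fun n : ℕ =>
        TCN n k / ((2 * (n : ℝ) ^ 2) ^ k / (k.factorial : ℝ) * rbt n))
      atTop (nhds 1)) :
    (∀ k, Tendsto (fun n : ℕ =>
        (RTCN n k / TCN n k) /
          ((1 / 4 ^ k) * (n.factorial : ℝ) / ((2 * n - 2).choose (n - 1) : ℝ)))
      atTop (nhds 1)) ∧
    (∀ k, 1 ≤ k → Tendsto (fun n : ℕ =>
        (RTCN n (k + 1) / TCN n (k + 1)) / (RTCN n k / TCN n k))
      atTop (nhds (1 / 4))) := by
  have keyA : ∀ k, Tendsto (fun n : ℕ =>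
      (RTCN n k / TCN n k) /
        ((1 / 4 ^ k) * (n.factorial : ℝ) / ((2 * n - 2).choose (n - 1) : ℝ)))
      atTop (nhds 1) := by
    intro k
    have hdiv := (hB_lemma k).div (hTCN k) one_ne_zero
    rw [div_one] at hdiv
    apply hdiv.congr'
    filter_upwards [eventually_ge_atTop 2] with n hn
    simp only [Pi.div_apply]
    -- nonzero facts
    have hch : (0:ℕ) < (2*n-2).choose (n-1) := Nat.choose_pos (by omega)
    have hchR : (0:ℝ) < ((2*n-2).choose (n-1) : ℝ) := by exact_mod_cast hch
    have hfac : ((2*n-2).choose (n-1) : ℝ) * ((n-1).factorial : ℝ) * ((n-1).factorial : ℝ)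
        = ((2*n-2).factorial : ℝ) := by
      have h := Nat.choose_mul_factorial_mul_factorial (show n-1 ≤ 2*n-2 by omega)
      have h2 : 2*n-2 - (n-1) = n-1 := by omega
      rw [h2] at h
      exact_mod_cast h
    have hn0 : (0:ℝ) < (n:ℝ) := by
      have : (2:ℝ) ≤ (n:ℝ) := by exact_mod_cast hn
      linarith
    have hTne : TCN n k ≠ 0 := (hpos n k).ne'
    have hnf : ((n.factorial : ℝ)) ≠ 0 := by positivity
    have hn1f : (((n-1).factorial : ℝ)) ≠ 0 := by positivity
    have h2nf : (((2*n-2).factorial : ℝ)) ≠ 0 := by positivity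
    have h2p : ((2:ℝ)^(n-1)) ≠ 0 := by positivity
    have hkf : ((k.factorial : ℝ)) ≠ 0 := by positivity
    have h4 : ((4:ℝ))^k = 2^(k*2) := by
      rw [show ((4:ℝ)) = 2^2 by norm_num, ← pow_mul, mul_comm]
    unfold RTCN rbt
    rw [← hfac]
    field_simp
    rw [h4]
    ring
  refine ⟨keyA, fun k _ => ?_⟩
  have hA1 := keyA k
  have hA2 := keyA (k+1)
  have hAne : ∀ᶠ n in atTop, (fun n : ℕ =>
      (RTCN n k / TCN n k) /
        ((1 / 4 ^ k) * (n.factorial : ℝ) / ((2 * n - 2).choose (n - 1) : ℝ))) n ≠ 0 :=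
    hA1.eventually_ne one_ne_zero
  have hlim := ((hA2.div hA1 one_ne_zero).mul_const ((1:ℝ)/4))
  rw [div_one, one_mul] at hlim
  apply hlim.congr'
  filter_upwards [hAne, eventually_ge_atTop 2] with n hne hn
  simp only [Pi.div_apply]
  set t1 : ℝ := (1 / 4 ^ k) * (n.factorial : ℝ) / ((2 * n - 2).choose (n - 1) : ℝ) with ht1
  set t2 : ℝ := (1 / 4 ^ (k+1)) * (n.factorial : ℝ) / ((2 * n - 2).choose (n - 1) : ℝ) with ht2
  have hch : (0:ℕ) < (2*n-2).choose (n-1) := Nat.choose_pos (by omega)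
  have hchR : (0:ℝ) < ((2*n-2).choose (n-1) : ℝ) := by exact_mod_cast hch
  have hnf : ((n.factorial : ℝ)) ≠ 0 := by positivity
  have ht1ne : t1 ≠ 0 := by rw [ht1]; positivity
  have ht2ne : t2 ≠ 0 := by rw [ht2]; positivity
  have hE1ne : RTCN n k / TCN n k ≠ 0 := by
    intro h0
    apply hne
    simp [h0]
  have ht12 : t2 = t1 * (1/4) := by
    rw [ht1, ht2, pow_succ]
    have h4 : ((4:ℝ))^k ≠ 0 := by positivity
    field_simp
  rw [ht12]
  set E2 := RTCN n (k + 1) / TCN n (k + 1) with hE2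
  set E1 := RTCN n k / TCN n k with hE1
  field_simp
end
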